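/- arXiv:1506.07385 — 7 statements merged into one kernel-verified Lean document; each statement's English description precedes it below -/
import Mathlib

section
/- Let (X, Σ, μ) be a measure space, A ∈ Σ a measurable set, f : X → [0,∞] a function, and let F(α) = μ(A ∩ {x ∈ X : f(x) ≥ α}) be the distribution function of f on A. If α₀ ∈ [0,∞] satisfies F(α₀) = α₀, then (s)∫_A f dμ = α₀. In particular, the Sugeno integral can be computed by solving the equation F(α) = α. -/
open MeasureTheory ENNReal Set

/-- The Sugeno (fuzzy) integral of `f` on `A` with respect to `μ`:
`(s)∫_A f dμ = ⨆ α, min (α, μ (A ∩ {x | f x ≥ α}))`. -/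
noncomputable def sugenoIntegral {X : Type*} [MeasurableSpace X] (μ : Measure X)
    (A : Set X) (f : X → ℝ≥0∞) : ℝ≥0∞ :=
  ⨆ α : ℝ≥0∞, min α (μ (A ∩ {x | α ≤ f x}))

theorem sugenoIntegral_eq_of_distribution_fixed_point {X : Type*} [MeasurableSpace X]
    (μ : Measure X) (A : Set X) (hA : MeasurableSet A) (f : X → ℝ≥0∞) (α₀ : ℝ≥0∞)
    (h : μ (A ∩ {x | α₀ ≤ f x}) = α₀) :
    sugenoIntegral μ A f = α₀ := by
  unfold sugenoIntegral
  apply le_antisymm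
  · apply iSup_le
    intro α
    rcases le_total α α₀ with hle | hle
    · exact le_trans (min_le_left _ _) hle
    · refine le_trans (min_le_right _ _) ?_
      rw [← h]
      exact measure_mono (inter_subset_inter_right _ (fun x hx => le_trans hle hx))
  · have : min α₀ (μ (A ∩ {x | α₀ ≤ f x})) = α₀ := by rw [h, min_self]
    calc α₀ = min α₀ (μ (A ∩ {x | α₀ ≤ f x})) := this.symm
      _ ≤ _ := le_iSup (fun α => min α (μ (A ∩ {x | α ≤ f x}))) α₀
end

section
/- Let g : [0,1] → (0,∞) be a log-convex function with g(0) < g(1), and let μ be the Lebesgue measure on ℝ. Let α ∈ (0,∞) be a solution of the equation g(0)^α · g(1)^{1−α} = α (equivalently, α = 1 − t where t satisfies g(0)^{1−t} · g(1)^t + t − 1 = 0). Then the Sugeno integral satisfies (s)∫_{[0,1]} g dμ ≤ min(α, 1). -/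
open MeasureTheory ENNReal Set

theorem sugenoIntegral_le_of_logConvex_lt (g : ℝ → ℝ)
    (hg_pos : ∀ x ∈ Icc (0:ℝ) 1, 0 < g x)
    (hg_logconvex : ∀ x ∈ Icc (0:ℝ) 1, ∀ y ∈ Icc (0:ℝ) 1, ∀ t ∈ Icc (0:ℝ) 1,
      g (t * x + (1 - t) * y) ≤ g x ^ t * g y ^ (1 - t))
    (hg01 : g 0 < g 1) (α : ℝ) (hα : 0 < α)
    (heq : g 0 ^ α * g 1 ^ (1 - α) = α) :
    sugenoIntegral volume (Icc (0:ℝ) 1) (fun x => ENNReal.ofReal (g x)) ≤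
      min (ENNReal.ofReal α) 1 := by
  have h01 : (0:ℝ) ∈ Icc (0:ℝ) 1 := ⟨le_refl _, zero_le_one⟩
  have h11 : (1:ℝ) ∈ Icc (0:ℝ) 1 := ⟨zero_le_one, le_refl _⟩
  have ha : 0 < g 0 := hg_pos 0 h01
  have hb : 0 < g 1 := hg_pos 1 h11
  have hdiv : 1 ≤ g 1 / g 0 := (one_le_div ha).mpr hg01.le
  have key : ∀ u : ℝ, g 1 ^ u * g 0 ^ (1 - u) = g 0 * (g 1 / g 0) ^ u := by
    intro u
    rw [Real.div_rpow hb.le ha.le, Real.rpow_sub ha, Real.rpow_one]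
    field_simp
  have hmono : ∀ s t : ℝ, s ≤ t → g 1 ^ s * g 0 ^ (1 - s) ≤ g 1 ^ t * g 0 ^ (1 - t) := by
    intro s t hst
    rw [key s, key t]
    exact mul_le_mul_of_nonneg_left (Real.rpow_le_rpow_of_exponent_le hdiv hst) ha.le
  rw [sugenoIntegral]
  apply iSup_le
  intro β
  refine le_min ?_ ?_
  · by_cases hβ : β ≤ ENNReal.ofReal α
    · exact (min_le_left _ _).trans hβ
    · push_neg at hβ
      refine (min_le_right _ _).trans ?_
      by_cases hβtop : β = ∞
      · have hempty : Icc (0:ℝ) 1 ∩ {x | β ≤ ENNReal.ofReal (g x)} = ∅ := by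
          subst hβtop
          ext x
          simp [top_le_iff, ENNReal.ofReal_ne_top]
        simp [hempty]
      · have hβr : α < β.toReal :=
          (ENNReal.ofReal_lt_iff_lt_toReal hα.le hβtop).mp hβ
        have hsub : Icc (0:ℝ) 1 ∩ {x | β ≤ ENNReal.ofReal (g x)} ⊆ Ioc (1 - α) 1 := by
          rintro x ⟨hx, hxg⟩
          have hgx : β.toReal ≤ g x := by
            have h := ENNReal.toReal_mono ENNReal.ofReal_ne_top hxg
            rwa [ENNReal.toReal_ofReal (hg_pos x hx).le] at h
          have h1 : α < g x := lt_of_lt_of_le hβr hgx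
          have h2 : g x ≤ g 1 ^ x * g 0 ^ (1 - x) := by
            have h := hg_logconvex 1 h11 0 h01 x hx
            simpa using h
          have h3 : g 1 ^ (1 - α) * g 0 ^ (1 - (1 - α)) < g 1 ^ x * g 0 ^ (1 - x) := by
            have : g 1 ^ (1 - α) * g 0 ^ (1 - (1 - α)) = α := by
              rw [show (1 : ℝ) - (1 - α) = α by ring, mul_comm]
              exact heq
            rw [this]
            exact lt_of_lt_of_le h1 h2
          have hx' : 1 - α < x := by
            by_contra h
            push_neg at h
            exact absurd (hmono x (1 - α) h) (not_le.mpr h3)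
          exact ⟨hx', hx.2⟩
        calc volume (Icc (0:ℝ) 1 ∩ {x | β ≤ ENNReal.ofReal (g x)})
            ≤ volume (Ioc (1 - α) 1) := measure_mono hsub
          _ = ENNReal.ofReal (1 - (1 - α)) := Real.volume_Ioc
          _ = ENNReal.ofReal α := by norm_num
  · refine (min_le_right _ _).trans ?_
    calc volume (Icc (0:ℝ) 1 ∩ {x | β ≤ ENNReal.ofReal (g x)})
        ≤ volume (Icc (0:ℝ) 1) := measure_mono inter_subset_left
      _ = 1 := by simp [Real.volume_Icc]
end

section
/- Let g : [0,1] → (0,∞) be a log-convex function with g(0) > g(1), and let μ be the Lebesgue measure on ℝ. Let α ∈ (0,∞) be a solution of the equation (ln α − ln g(0)) / (ln g(1) − ln g(0)) = α (equivalently, g(0)^{1−α} · g(1)^α = α). Then the Sugeno integral satisfies (s)∫_{[0,1]} g dμ ≤ min(α, 1). -/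
open MeasureTheory ENNReal Set

theorem sugenoIntegral_le_of_logConvex_gt (g : ℝ → ℝ)
    (hg_pos : ∀ x ∈ Icc (0:ℝ) 1, 0 < g x)
    (hg_logconvex : ∀ x ∈ Icc (0:ℝ) 1, ∀ y ∈ Icc (0:ℝ) 1, ∀ t ∈ Icc (0:ℝ) 1,
      g (t * x + (1 - t) * y) ≤ g x ^ t * g y ^ (1 - t))
    (hg01 : g 0 > g 1) (α : ℝ) (hα : 0 < α)
    (heq : (Real.log α - Real.log (g 0)) / (Real.log (g 1) - Real.log (g 0)) = α) :
    sugenoIntegral volume (Icc (0:ℝ) 1) (fun x => ENNReal.ofReal (g x)) ≤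
      min (ENNReal.ofReal α) 1 := by
  have h0 : (0:ℝ) ∈ Icc (0:ℝ) 1 := by constructor <;> norm_num
  have h1 : (1:ℝ) ∈ Icc (0:ℝ) 1 := by constructor <;> norm_num
  have hg0 := hg_pos 0 h0
  have hg1 := hg_pos 1 h1
  set L0 := Real.log (g 0)
  set L1 := Real.log (g 1)
  have hd : L1 - L0 < 0 := by
    have : L1 < L0 := Real.log_lt_log hg1 hg01
    linarith
  have hlogα : Real.log α - L0 = α * (L1 - L0) := by
    have hdne : L1 - L0 ≠ 0 := ne_of_lt hd
    rw [div_eq_iff hdne] at heq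
    linarith [heq]
  -- key pointwise bound
  have key : ∀ x ∈ Icc (0:ℝ) 1, ∀ b : ℝ, α ≤ b → b ≤ g x → x ≤ α := by
    intro x hx b hab hbg
    have hxx : x * 1 + (1 - x) * 0 = x := by ring
    have hconv := hg_logconvex 1 h1 0 h0 x hx
    rw [hxx] at hconv
    have hgx := hg_pos x hx
    have hlog : Real.log (g x) ≤ x * L1 + (1 - x) * L0 := by
      calc Real.log (g x) ≤ Real.log (g 1 ^ x * g 0 ^ (1 - x)) :=
            Real.log_le_log hgx hconv
        _ = x * L1 + (1 - x) * L0 := by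
            rw [Real.log_mul (by positivity) (by positivity),
              Real.log_rpow hg1, Real.log_rpow hg0]
    have hb : Real.log α ≤ Real.log (g x) :=
      Real.log_le_log hα (le_trans hab hbg)
    nlinarith [hb, hlog, hlogα, hd]
  refine iSup_le fun β => le_min ?_ ?_
  · -- ≤ ofReal α
    rcases le_or_gt β (ENNReal.ofReal α) with h | h
    · exact le_trans (min_le_left _ _) h
    · refine le_trans (min_le_right _ _) ?_
      rcases eq_or_ne β ⊤ with rfl | hβtop
      · have : Icc (0:ℝ) 1 ∩ {x | (⊤:ℝ≥0∞) ≤ ENNReal.ofReal (g x)} = ∅ := by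
          ext x
          simp only [mem_inter_iff, mem_setOf_eq, top_le_iff, mem_empty_iff_false,
            iff_false, not_and]
          intro _
          exact (ENNReal.ofReal_ne_top)
        rw [this]
        simp
      · have hβα : α ≤ β.toReal := by
          have := (ENNReal.ofReal_lt_iff_lt_toReal hα.le hβtop).mp h
          linarith
        have hsub : Icc (0:ℝ) 1 ∩ {x | β ≤ ENNReal.ofReal (g x)} ⊆ Icc (0:ℝ) α := by
          intro x ⟨hx, hxβ⟩
          have hgx := hg_pos x hx
          have : β.toReal ≤ g x :=
            (ENNReal.le_ofReal_iff_toReal_le hβtop hgx.le).mp hxβ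
          exact ⟨hx.1, key x hx β.toReal hβα this⟩
        calc volume _ ≤ volume (Icc (0:ℝ) α) := measure_mono hsub
          _ = ENNReal.ofReal α := by rw [Real.volume_Icc]; norm_num
  · -- ≤ 1
    refine le_trans (min_le_right _ _) ?_
    calc volume _ ≤ volume (Icc (0:ℝ) 1) := measure_mono inter_subset_left
      _ = 1 := by rw [Real.volume_Icc]; norm_num
end

section
/- Let a < b be real numbers, let g : [a,b] → (0,∞) be a log-convex function with g(a) < g(b), and let μ be the Lebesgue measure on ℝ. Let α₁ ∈ (0,∞) be a solution of the equation b − ((b−a)·ln α − b·ln g(a) + a·ln g(b)) / (ln g(b) − ln g(a)) = α. Then the Sugeno integral satisfies (s)∫_{[a,b]} g dμ ≤ min(α₁, b − a). -/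
open MeasureTheory ENNReal Set

/-! On `[a, b]` the logarithm of a log-convex `g` lies below its chord, so every point where
`g ≥ r` lies to the right of the point where that chord reaches `log r`. For `r = α₁` this point
is `b - α₁` by the defining equation of `α₁`, so the level set `{g ≥ α₁}` has measure at most
`α₁`, which bounds the Sugeno integral by `α₁`. -/

section Sugeno

variable {X : Type*} [MeasurableSpace X] {μ : Measure X} {A : Set X} {f : X → ℝ≥0∞}

theorem sugenoIntegral_le_measure : sugenoIntegral μ A f ≤ μ A :=
  iSup_le fun _ => (min_le_right _ _).trans (measure_mono inter_subset_left)

theorem sugenoIntegral_le_of_measure_le {c : ℝ≥0∞} (h : μ (A ∩ {x | c ≤ f x}) ≤ c) :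
    sugenoIntegral μ A f ≤ c := by
  refine iSup_le fun α => ?_
  rcases le_or_gt α c with hαc | hcα
  · exact (min_le_left _ _).trans hαc
  · calc min α (μ (A ∩ {x | α ≤ f x})) ≤ μ (A ∩ {x | c ≤ f x}) :=
          (min_le_right _ _).trans <| measure_mono fun x ⟨hx, hαx⟩ => ⟨hx, hcα.le.trans hαx⟩
      _ ≤ c := h

end Sugeno

section LogConvex

variable {a b x : ℝ} {g : ℝ → ℝ}

theorem log_le_chord_of_logConvex (hab : a < b) (hg_pos : ∀ x ∈ Icc a b, 0 < g x)
    (hg_logconvex : ∀ x ∈ Icc a b, ∀ y ∈ Icc a b, ∀ t ∈ Icc (0:ℝ) 1,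
      g (t * x + (1 - t) * y) ≤ g x ^ t * g y ^ (1 - t))
    (hx : x ∈ Icc a b) :
    (b - a) * Real.log (g x) ≤ (b - x) * Real.log (g a) + (x - a) * Real.log (g b) := by
  have hba : 0 < b - a := sub_pos.2 hab
  have ha : a ∈ Icc a b := left_mem_Icc.2 hab.le
  have hb : b ∈ Icc a b := right_mem_Icc.2 hab.le
  set t := (b - x) / (b - a) with ht
  have ht01 : t ∈ Icc (0:ℝ) 1 :=
    ⟨div_nonneg (by linarith [hx.2]) hba.le, (div_le_one hba).2 (by linarith [hx.1])⟩
  have hxt : t * a + (1 - t) * b = x := by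
    rw [ht]; field_simp; ring
  have hgx : g x ≤ g a ^ t * g b ^ (1 - t) := hxt ▸ hg_logconvex a ha b hb t ht01
  have hlog : Real.log (g x) ≤ t * Real.log (g a) + (1 - t) * Real.log (g b) := by
    calc Real.log (g x) ≤ Real.log (g a ^ t * g b ^ (1 - t)) :=
          Real.log_le_log (hg_pos x hx) hgx
      _ = t * Real.log (g a) + (1 - t) * Real.log (g b) := by
          rw [Real.log_mul (Real.rpow_pos_of_pos (hg_pos a ha) t).ne'
              (Real.rpow_pos_of_pos (hg_pos b hb) _).ne',
            Real.log_rpow (hg_pos a ha), Real.log_rpow (hg_pos b hb)]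
  calc (b - a) * Real.log (g x)
      ≤ (b - a) * (t * Real.log (g a) + (1 - t) * Real.log (g b)) :=
        mul_le_mul_of_nonneg_left hlog hba.le
    _ = (b - x) * Real.log (g a) + (x - a) * Real.log (g b) := by
        rw [ht]; field_simp; ring

theorem chord_crossing_le_of_le_of_logConvex (hab : a < b) (hg_pos : ∀ x ∈ Icc a b, 0 < g x)
    (hg_logconvex : ∀ x ∈ Icc a b, ∀ y ∈ Icc a b, ∀ t ∈ Icc (0:ℝ) 1,
      g (t * x + (1 - t) * y) ≤ g x ^ t * g y ^ (1 - t))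
    (hgab : g a < g b) {r : ℝ} (hr : 0 < r) (hx : x ∈ Icc a b) (hrx : r ≤ g x) :
    ((b - a) * Real.log r - b * Real.log (g a) + a * Real.log (g b)) /
      (Real.log (g b) - Real.log (g a)) ≤ x := by
  have hlog_ab : Real.log (g a) < Real.log (g b) :=
    Real.log_lt_log (hg_pos a (left_mem_Icc.2 hab.le)) hgab
  have hlog_rx : (b - a) * Real.log r ≤ (b - a) * Real.log (g x) :=
    mul_le_mul_of_nonneg_left (Real.log_le_log hr hrx) (sub_pos.2 hab).le
  rw [div_le_iff₀ (sub_pos.2 hlog_ab)]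
  linarith [log_le_chord_of_logConvex hab hg_pos hg_logconvex hx]

end LogConvex

theorem sugenoIntegral_le_of_logConvex_lt_Icc (a b : ℝ) (hab : a < b) (g : ℝ → ℝ)
    (hg_pos : ∀ x ∈ Icc a b, 0 < g x)
    (hg_logconvex : ∀ x ∈ Icc a b, ∀ y ∈ Icc a b, ∀ t ∈ Icc (0:ℝ) 1,
      g (t * x + (1 - t) * y) ≤ g x ^ t * g y ^ (1 - t))
    (hgab : g a < g b) (α₁ : ℝ) (hα₁ : 0 < α₁)
    (heq : b - ((b - a) * Real.log α₁ - b * Real.log (g a) + a * Real.log (g b)) /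
        (Real.log (g b) - Real.log (g a)) = α₁) :
    sugenoIntegral volume (Icc a b) (fun x => ENNReal.ofReal (g x)) ≤
      min (ENNReal.ofReal α₁) (ENNReal.ofReal (b - a)) := by
  have hlevel : Icc a b ∩ {x | ENNReal.ofReal α₁ ≤ ENNReal.ofReal (g x)} ⊆
      Icc (((b - a) * Real.log α₁ - b * Real.log (g a) + a * Real.log (g b)) /
        (Real.log (g b) - Real.log (g a))) b := fun x ⟨hx, hαx⟩ =>
    ⟨chord_crossing_le_of_le_of_logConvex hab hg_pos hg_logconvex hgab hα₁ hx
      ((ENNReal.ofReal_le_ofReal_iff (hg_pos x hx).le).1 hαx), hx.2⟩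
  refine le_min (sugenoIntegral_le_of_measure_le ?_)
    (sugenoIntegral_le_measure.trans_eq Real.volume_Icc)
  calc volume (Icc a b ∩ {x | ENNReal.ofReal α₁ ≤ ENNReal.ofReal (g x)})
      ≤ volume (Icc (((b - a) * Real.log α₁ - b * Real.log (g a) + a * Real.log (g b)) /
          (Real.log (g b) - Real.log (g a))) b) := measure_mono hlevel
    _ = ENNReal.ofReal α₁ := by rw [Real.volume_Icc, heq]
end

section
/- Let a < b be real numbers, let g : [a,b] → (0,∞) be a log-convex function with g(a) > g(b), and let μ be the Lebesgue measure on ℝ. Let α₂ ∈ (0,∞) be a solution of the equation ((b−a)·ln α − b·ln g(a) + a·ln g(b)) / (ln g(b) − ln g(a)) − a = α. Then the Sugeno integral satisfies (s)∫_{[a,b]} g dμ ≤ min(α₂, b − a). -/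
open MeasureTheory ENNReal Set

/-! `log ∘ g` is convex, so on `[a, b]` it lies below its secant `ℓ`, which is strictly decreasing
because `g b < g a`. The equation for `α₂` says exactly that `ℓ (a + α₂) = log α₂`. Hence
`g x > α₂` forces `x < a + α₂`: every superlevel set `{g ≥ α}` with `α > α₂` lies in
`[a, a + α₂)`, so `min (α, μ {g ≥ α}) ≤ α₂`; it is also at most `μ [a, b] = b - a`. -/

section Sugeno

variable {X : Type*} [MeasurableSpace X] {μ : Measure X} {A : Set X} {f : X → ℝ≥0∞}

theorem sugenoIntegral_le_of_measure_superlevel_le {c : ℝ≥0∞}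
    (h : ∀ α, c < α → μ (A ∩ {x | α ≤ f x}) ≤ c) : sugenoIntegral μ A f ≤ c :=
  iSup_le fun α => (le_or_gt α c).elim (fun hα => (min_le_left _ _).trans hα)
    fun hα => (min_le_right _ _).trans (h α hα)

end Sugeno

theorem convexOn_log_of_le_rpow {s : Set ℝ} (hs : Convex ℝ s) {g : ℝ → ℝ}
    (hg_pos : ∀ x ∈ s, 0 < g x)
    (hg : ∀ x ∈ s, ∀ y ∈ s, ∀ t ∈ Icc (0:ℝ) 1, g (t * x + (1 - t) * y) ≤ g x ^ t * g y ^ (1 - t)) :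
    ConvexOn ℝ s fun x => Real.log (g x) := by
  refine ⟨hs, fun x hx y hy t u ht hu htu => ?_⟩
  obtain rfl : u = 1 - t := by linarith
  have hmem := hs hx hy ht hu htu
  simp only [smul_eq_mul] at hmem ⊢
  have hgx := hg_pos x hx
  have hgy := hg_pos y hy
  calc Real.log (g (t * x + (1 - t) * y)) ≤ Real.log (g x ^ t * g y ^ (1 - t)) :=
        Real.log_le_log (hg_pos _ hmem) (hg x hx y hy t ⟨ht, by linarith⟩)
    _ = t * Real.log (g x) + (1 - t) * Real.log (g y) := by
        rw [Real.log_mul (by positivity) (by positivity), Real.log_rpow hgx, Real.log_rpow hgy]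

theorem ConvexOn.le_secant {s : Set ℝ} {f : ℝ → ℝ} (hf : ConvexOn ℝ s f) {a b x : ℝ}
    (ha : a ∈ s) (hb : b ∈ s) (hx : x ∈ Icc a b) :
    f x ≤ f a + (f b - f a) / (b - a) * (x - a) := by
  rcases hx.1.eq_or_lt with rfl | hax
  · simp
  have hslope := hf.secant_mono ha (hf.1.ordConnected.out ha hb hx) hb hax.ne'
    (hax.trans_le hx.2).ne' hx.2
  have := (div_le_iff₀ (sub_pos.2 hax)).1 hslope
  linarith

theorem lt_add_of_lt_of_convexOn_log {a b α₂ : ℝ} {g : ℝ → ℝ} (hab : a < b)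
    (hg : ConvexOn ℝ (Icc a b) fun x => Real.log (g x)) (hgb : 0 < g b) (hgab : g b < g a)
    (hα₂ : 0 < α₂)
    (heq : ((b - a) * Real.log α₂ - b * Real.log (g a) + a * Real.log (g b)) /
        (Real.log (g b) - Real.log (g a)) - a = α₂)
    {x : ℝ} (hx : x ∈ Icc a b) (hgx : α₂ < g x) : x < a + α₂ := by
  have hD : Real.log (g b) - Real.log (g a) < 0 := sub_neg.2 (Real.log_lt_log hgb hgab)
  have hline : Real.log α₂ =
      Real.log (g a) + (Real.log (g b) - Real.log (g a)) / (b - a) * α₂ := by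
    have hba : b - a ≠ 0 := (sub_pos.2 hab).ne'
    field_simp [hD.ne] at heq ⊢
    linear_combination heq
  set slope := (Real.log (g b) - Real.log (g a)) / (b - a)
  have hslope : slope < 0 := div_neg_of_neg_of_pos hD (sub_pos.2 hab)
  have hsecant : Real.log (g x) ≤ Real.log (g a) + slope * (x - a) :=
    hg.le_secant (left_mem_Icc.2 hab.le) (right_mem_Icc.2 hab.le) hx
  have hlog := Real.log_lt_log hα₂ hgx
  have hprod : slope * (α₂ - (x - a)) < 0 := by linarith
  linarith [pos_of_mul_neg_right hprod hslope.le]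

theorem sugenoIntegral_le_of_logConvex_gt_Icc (a b : ℝ) (hab : a < b) (g : ℝ → ℝ)
    (hg_pos : ∀ x ∈ Icc a b, 0 < g x)
    (hg_logconvex : ∀ x ∈ Icc a b, ∀ y ∈ Icc a b, ∀ t ∈ Icc (0:ℝ) 1,
      g (t * x + (1 - t) * y) ≤ g x ^ t * g y ^ (1 - t))
    (hgab : g a > g b) (α₂ : ℝ) (hα₂ : 0 < α₂)
    (heq : ((b - a) * Real.log α₂ - b * Real.log (g a) + a * Real.log (g b)) /
        (Real.log (g b) - Real.log (g a)) - a = α₂) :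
    sugenoIntegral volume (Icc a b) (fun x => ENNReal.ofReal (g x)) ≤
      min (ENNReal.ofReal α₂) (ENNReal.ofReal (b - a)) := by
  have hconvex := convexOn_log_of_le_rpow (convex_Icc a b) hg_pos hg_logconvex
  have hgb := hg_pos b (right_mem_Icc.2 hab.le)
  refine le_min (sugenoIntegral_le_of_measure_superlevel_le fun α hα => ?_)
    (sugenoIntegral_le_measure.trans_eq Real.volume_Icc)
  calc volume (Icc a b ∩ {x | α ≤ ENNReal.ofReal (g x)}) ≤ volume (Ico a (a + α₂)) :=
        measure_mono fun x ⟨hx, hαx⟩ => ⟨hx.1, lt_add_of_lt_of_convexOn_log hab hconvex hgb hgab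
          hα₂ heq hx ((ofReal_lt_ofReal_iff'.1 (hα.trans_le hαx)).1)⟩
    _ = ENNReal.ofReal α₂ := by rw [Real.volume_Ico, add_sub_cancel_left]
end

section
/- Let f(x) = e^{−x} on [0,1] (a log-convex function) and let μ be the Lebesgue measure on ℝ. Then the Sugeno integral (s)∫_{[0,1]} f dμ equals the unique α ∈ (0,1) satisfying −ln α = α, and this value is strictly less than f(1/2) = e^{−1/2}. Consequently, the left-hand side of the classical Hermite–Hadamard inequality, f((0+1)/2) ≤ (s)∫_{[0,1]} f dμ, fails for the Sugeno integral. -/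
open MeasureTheory ENNReal Set

private lemma g_strictMonoOn : StrictMonoOn (fun x : ℝ => x + Real.log x) (Ioi 0) := by
  intro a ha b hb hab
  exact add_lt_add hab (Real.log_lt_log ha hab)

theorem hermite_hadamard_left_fails_for_sugeno :
    (∃! α : ℝ, α ∈ Ioo (0:ℝ) 1 ∧ -Real.log α = α) ∧
    ∀ α : ℝ, α ∈ Ioo (0:ℝ) 1 → -Real.log α = α →
      sugenoIntegral volume (Icc (0:ℝ) 1) (fun x => ENNReal.ofReal (Real.exp (-x))) =
        ENNReal.ofReal α ∧
      α < Real.exp (-(1/2 : ℝ)) ∧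
      ¬ (ENNReal.ofReal (Real.exp (-((0 + 1) / 2 : ℝ))) ≤
          sugenoIntegral volume (Icc (0:ℝ) 1) (fun x => ENNReal.ofReal (Real.exp (-x)))) := by
  -- existence of a root
  have hexp1 : (0:ℝ) < Real.exp (-1) := Real.exp_pos _
  have hexp1lt : Real.exp (-1) < 1 := by
    rw [Real.exp_lt_one_iff]; norm_num
  have hcont : ContinuousOn (fun x : ℝ => x + Real.log x) (Icc (Real.exp (-1)) 1) := by
    refine continuousOn_id.add (Real.continuousOn_log.mono ?_)
    intro x hx
    simp only [mem_compl_iff, mem_singleton_iff]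
    exact ne_of_gt (lt_of_lt_of_le hexp1 hx.1)
  have hivt := intermediate_value_Icc (le_of_lt hexp1lt) hcont
  have h0mem : (0:ℝ) ∈ Icc ((fun x : ℝ => x + Real.log x) (Real.exp (-1)))
      ((fun x : ℝ => x + Real.log x) 1) := by
    constructor
    · simp only [Real.log_exp]
      linarith
    · simp
  obtain ⟨c, hcmem, hc⟩ := hivt h0mem
  have hc0 : 0 < c := lt_of_lt_of_le hexp1 hcmem.1
  have hc1 : c < 1 := by
    rcases lt_or_eq_of_le hcmem.2 with h | h
    · exact h
    · exfalso; rw [h] at hc; simp at hc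
  have hcroot : -Real.log c = c := by
    simp only at hc; linarith
  have huniq : ∀ a b : ℝ, a ∈ Ioo (0:ℝ) 1 → -Real.log a = a →
      b ∈ Ioo (0:ℝ) 1 → -Real.log b = b → a = b := by
    intro a b ha hra hb hrb
    apply g_strictMonoOn.injOn ha.1 hb.1
    show a + Real.log a = b + Real.log b
    linarith
  constructor
  · exact ⟨c, ⟨⟨hc0, hc1⟩, hcroot⟩, fun y hy => huniq y c hy.1 hy.2 ⟨hc0, hc1⟩ hcroot⟩
  intro α hα hαroot
  have hα0 : (0:ℝ) < α := hα.1
  have hα1 : α < 1 := hα.2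
  have hlogα : Real.log α = -α := by linarith
  -- the integral equals ofReal α
  have hint : sugenoIntegral volume (Icc (0:ℝ) 1) (fun x => ENNReal.ofReal (Real.exp (-x))) =
      ENNReal.ofReal α := by
    apply le_antisymm
    · apply iSup_le
      intro β
      by_cases hβ : β ≤ ENNReal.ofReal α
      · exact le_trans (min_le_left _ _) hβ
      · push_neg at hβ
        refine le_trans (min_le_right _ _) ?_
        have hsub : Icc (0:ℝ) 1 ∩ {x | β ≤ ENNReal.ofReal (Real.exp (-x))} ⊆ Ico 0 α := by
          intro x ⟨hx1, hx2⟩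
          simp only [mem_setOf_eq] at hx2
          have hlt : ENNReal.ofReal α < ENNReal.ofReal (Real.exp (-x)) := lt_of_lt_of_le hβ hx2
          have : α < Real.exp (-x) := by
            by_contra h
            push_neg at h
            exact absurd (ENNReal.ofReal_le_ofReal h) (not_le_of_gt hlt)
          have : Real.log α < -x := by
            have := Real.log_lt_log hα0 this
            rwa [Real.log_exp] at this
          rw [hlogα] at this
          exact ⟨hx1.1, by linarith⟩
        calc volume (Icc (0:ℝ) 1 ∩ {x | β ≤ ENNReal.ofReal (Real.exp (-x))})
            ≤ volume (Ico (0:ℝ) α) := measure_mono hsub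
          _ = ENNReal.ofReal α := by rw [Real.volume_Ico]; norm_num
    · have hkey : min (ENNReal.ofReal α)
          (volume (Icc (0:ℝ) 1 ∩ {x | ENNReal.ofReal α ≤ ENNReal.ofReal (Real.exp (-x))})) =
          ENNReal.ofReal α := by
        have hset : Icc (0:ℝ) 1 ∩ {x | ENNReal.ofReal α ≤ ENNReal.ofReal (Real.exp (-x))} =
            Icc (0:ℝ) α := by
          ext x
          simp only [mem_inter_iff, mem_Icc, mem_setOf_eq]
          constructor
          · rintro ⟨⟨h0, h1⟩, h2⟩
            have hle : α ≤ Real.exp (-x) := by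
              rwa [ENNReal.ofReal_le_ofReal_iff (Real.exp_pos _).le] at h2
            have : Real.log α ≤ -x := (Real.log_le_iff_le_exp hα0).2 hle
            rw [hlogα] at this
            exact ⟨h0, by linarith⟩
          · rintro ⟨h0, hxα⟩
            refine ⟨⟨h0, by linarith⟩, ?_⟩
            apply ENNReal.ofReal_le_ofReal
            rw [← Real.exp_log hα0, hlogα]
            exact Real.exp_le_exp.2 (by linarith)
        rw [hset, Real.volume_Icc]
        simp [min_eq_left, le_refl]
      calc ENNReal.ofReal α = min (ENNReal.ofReal α)
            (volume (Icc (0:ℝ) 1 ∩ {x | ENNReal.ofReal α ≤ ENNReal.ofReal (Real.exp (-x))})) :=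
            hkey.symm
        _ ≤ _ := le_iSup (fun β : ℝ≥0∞ => min β
            (volume (Icc (0:ℝ) 1 ∩ {x | β ≤ ENNReal.ofReal (Real.exp (-x))}))) (ENNReal.ofReal α)
  have hαlt : α < Real.exp (-(1/2 : ℝ)) := by
    by_contra h
    push_neg at h
    have hg : Real.exp (-(1/2:ℝ)) + Real.log (Real.exp (-(1/2:ℝ))) ≤ α + Real.log α :=
      g_strictMonoOn.monotoneOn (Real.exp_pos _) hα0 h
    rw [Real.log_exp, hlogα] at hg
    have hhalf : (1/2 : ℝ) < Real.exp (-(1/2:ℝ)) := by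
      rw [Real.exp_neg]
      rw [lt_inv_comm₀ (by norm_num) (Real.exp_pos _)]
      have h1 : Real.exp (1/2 : ℝ) * Real.exp (1/2:ℝ) = Real.exp 1 := by
        rw [← Real.exp_add]; norm_num
      nlinarith [Real.exp_pos (1/2:ℝ), Real.exp_one_lt_d9]
    linarith
  refine ⟨hint, hαlt, ?_⟩
  rw [hint]
  intro hle
  rw [show (-((0+1)/2 : ℝ)) = -(1/2:ℝ) by norm_num] at hle
  rw [ENNReal.ofReal_le_ofReal_iff hα0.le] at hle
  linarith
end

section
/- Let f(x) = e^{−cos(x)−1} on [0,1] (a log-convex function) and let μ be the Lebesgue measure on ℝ. Then the Sugeno integral (s)∫_{[0,1]} f dμ is strictly greater than the logarithmic mean L(f(0), f(1)) = (f(0) − f(1)) / (ln f(0) − ln f(1)). Consequently, the right-hand side of the Hermite–Hadamard-type inequality for log-convex functions, (s)∫_{[0,1]} f dμ ≤ L(f(0), f(1)), fails for the Sugeno integral. -/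
open MeasureTheory ENNReal Set

-- bounds on cos 1 via sin (1/2)
lemma cos_one_lb : (0.5345 : ℝ) ≤ Real.cos 1 := by
  have h := Real.sin_bound (x := 1/2) (by rw [abs_of_nonneg] <;> norm_num)
  have hid : Real.cos 1 = 1 - 2 * Real.sin (1/2) ^ 2 := by
    have := Real.cos_two_mul (1/2)
    have hsq := Real.sin_sq_add_cos_sq (1/2)
    norm_num at this
    nlinarith [this, hsq]
  rw [abs_le, abs_of_nonneg (by norm_num : (0:ℝ) ≤ 1/2)] at h
  have hs2 : Real.sin (1/2) ≤ 0.4824219 := by nlinarith [h.2]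
  have hs0 : (0:ℝ) ≤ Real.sin (1/2) := Real.sin_nonneg_of_nonneg_of_le_pi (by norm_num)
    (by linarith [Real.pi_gt_three])
  rw [hid]; nlinarith

lemma cos_one_ub : Real.cos 1 ≤ (0.5471 : ℝ) := by
  have h := Real.sin_bound (x := 1/2) (by rw [abs_of_nonneg] <;> norm_num)
  have hid : Real.cos 1 = 1 - 2 * Real.sin (1/2) ^ 2 := by
    have := Real.cos_two_mul (1/2)
    have hsq := Real.sin_sq_add_cos_sq (1/2)
    norm_num at this
    nlinarith [this, hsq]
  rw [abs_le, abs_of_nonneg (by norm_num : (0:ℝ) ≤ 1/2)] at h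
  have hs1 : (0.4759114:ℝ) ≤ Real.sin (1/2) := by nlinarith [h.1]
  rw [hid]; nlinarith

lemma exp_neg_two_lb : (0.135335 : ℝ) ≤ Real.exp (-2) := by
  have h := Real.exp_one_lt_d9
  have h2 : Real.exp 2 ≤ 7.38905610 := by
    have : Real.exp 2 = Real.exp 1 * Real.exp 1 := by
      rw [← Real.exp_add]; norm_num
    nlinarith [Real.exp_pos 1]
  have : Real.exp (-2) = (Real.exp 2)⁻¹ := by
    rw [← Real.exp_neg]
  rw [this]
  rw [le_inv_comm₀] <;> nlinarith [Real.exp_pos 2]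

lemma exp_neg_c_ub : Real.exp (-Real.cos 1 - 1) ≤ (0.216058 : ℝ) := by
  have hc := cos_one_lb
  have he1 := Real.exp_one_gt_d9
  have hser := Real.sum_le_exp_of_nonneg (x := Real.cos 1) (by nlinarith) 4
  have hsum : (1 : ℝ) + Real.cos 1 + Real.cos 1 ^ 2 / 2 + Real.cos 1 ^ 3 / 6
      ≤ Real.exp (Real.cos 1) := by
    refine le_trans (le_of_eq ?_) hser
    rw [Finset.sum_range_succ, Finset.sum_range_succ, Finset.sum_range_succ,
      Finset.sum_range_succ, Finset.sum_range_zero]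
    norm_num [Nat.factorial]
  have hc2 : (0.5345:ℝ)^2 ≤ Real.cos 1 ^ 2 := by gcongr
  have hc3 : (0.5345:ℝ)^3 ≤ Real.cos 1 ^ 3 := by gcongr
  have hlb : (1.7027 : ℝ) ≤ Real.exp (Real.cos 1) := by
    refine le_trans ?_ hsum
    nlinarith
  have hprod : (4.6284 : ℝ) ≤ Real.exp (Real.cos 1 + 1) := by
    rw [Real.exp_add]
    have := mul_le_mul hlb he1.le (by norm_num) (Real.exp_pos _).le
    linarith
  have : Real.exp (-Real.cos 1 - 1) = (Real.exp (Real.cos 1 + 1))⁻¹ := by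
    rw [← Real.exp_neg]; ring_nf
  rw [this, inv_le_comm₀ (by positivity) (by norm_num)]
  linarith

lemma exp_small_ub : Real.exp (1.69 : ℝ) ≤ 50/9 := by
  have h := Real.exp_bound' (x := (0.845:ℝ)) (by norm_num) (by norm_num) (n := 4) (by norm_num)
  have hs : Real.exp (0.845 : ℝ) ≤ 2.32913 := by
    refine h.trans ?_
    rw [Finset.sum_range_succ, Finset.sum_range_succ, Finset.sum_range_succ,
      Finset.sum_range_succ, Finset.sum_range_zero]
    norm_num [Nat.factorial]
  have : Real.exp (1.69 : ℝ) = Real.exp 0.845 * Real.exp 0.845 := by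
    rw [← Real.exp_add]; norm_num
  nlinarith [Real.exp_pos (0.845:ℝ)]

theorem hermite_hadamard_right_fails_for_sugeno :
    ENNReal.ofReal ((Real.exp (-Real.cos 0 - 1) - Real.exp (-Real.cos 1 - 1)) /
        (Real.log (Real.exp (-Real.cos 0 - 1)) - Real.log (Real.exp (-Real.cos 1 - 1)))) <
      sugenoIntegral volume (Icc (0:ℝ) 1) (fun x => ENNReal.ofReal (Real.exp (-Real.cos x - 1))) ∧
    ¬ (sugenoIntegral volume (Icc (0:ℝ) 1) (fun x => ENNReal.ofReal (Real.exp (-Real.cos x - 1))) ≤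
        ENNReal.ofReal ((Real.exp (-Real.cos 0 - 1) - Real.exp (-Real.cos 1 - 1)) /
          (Real.log (Real.exp (-Real.cos 0 - 1)) - Real.log (Real.exp (-Real.cos 1 - 1))))) := by
  have hpi := Real.pi_gt_three
  -- the logarithmic mean is < 0.18
  have hL : (Real.exp (-Real.cos 0 - 1) - Real.exp (-Real.cos 1 - 1)) /
      (Real.log (Real.exp (-Real.cos 0 - 1)) - Real.log (Real.exp (-Real.cos 1 - 1))) < 0.18 := by
    rw [Real.log_exp, Real.log_exp, Real.cos_zero]
    have hc2 := cos_one_ub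
    have hd : (-(1:ℝ) - 1) - (-Real.cos 1 - 1) < 0 := by linarith
    rw [div_lt_iff_of_neg hd]
    have h1 := exp_neg_two_lb
    have h2 := exp_neg_c_ub
    have : Real.exp (-(1:ℝ) - 1) = Real.exp (-2) := by norm_num
    rw [this]
    nlinarith
  -- Sugeno integral ≥ 0.18
  have hS : ENNReal.ofReal 0.18 ≤
      sugenoIntegral volume (Icc (0:ℝ) 1)
        (fun x => ENNReal.ofReal (Real.exp (-Real.cos x - 1))) := by
    have hstep : ENNReal.ofReal 0.18 ≤ min (ENNReal.ofReal 0.18)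
        (volume (Icc (0:ℝ) 1 ∩
          {x | ENNReal.ofReal 0.18 ≤ ENNReal.ofReal (Real.exp (-Real.cos x - 1))})) := by
      refine le_min le_rfl ?_
      have hsub : Icc (0.82:ℝ) 1 ⊆ Icc (0:ℝ) 1 ∩
          {x | ENNReal.ofReal 0.18 ≤ ENNReal.ofReal (Real.exp (-Real.cos x - 1))} := by
        intro x hx
        obtain ⟨hx1, hx2⟩ := hx
        refine ⟨⟨by linarith, hx2⟩, ?_⟩
        simp only [mem_setOf_eq]
        refine ENNReal.ofReal_le_ofReal ?_
        have hcos : Real.cos x ≤ Real.cos 0.82 :=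
          Real.cos_le_cos_of_nonneg_of_le_pi (by norm_num) (by linarith) hx1
        have hcb : Real.cos (0.82:ℝ) ≤ 0.69 := by
          have h := Real.cos_bound (x := (0.82:ℝ)) (by rw [abs_of_nonneg] <;> norm_num)
          rw [abs_le, abs_of_nonneg (by norm_num : (0:ℝ) ≤ 0.82)] at h
          nlinarith [h.2]
        have : (0.18:ℝ) ≤ Real.exp (-1.69) := by
          rw [Real.exp_neg, le_inv_comm₀ (by norm_num) (Real.exp_pos _)]
          calc Real.exp (1.69:ℝ) ≤ 50/9 := exp_small_ub
            _ ≤ (0.18:ℝ)⁻¹ := by norm_num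
        refine this.trans (Real.exp_le_exp.mpr (by linarith))
      calc ENNReal.ofReal 0.18 = volume (Icc (0.82:ℝ) 1) := by
            rw [Real.volume_Icc]; norm_num
        _ ≤ _ := measure_mono hsub
    exact hstep.trans (le_iSup (fun α => min α (volume (Icc (0:ℝ) 1 ∩
      {x | α ≤ ENNReal.ofReal (Real.exp (-Real.cos x - 1))}))) (ENNReal.ofReal 0.18))
  have hmain : ENNReal.ofReal ((Real.exp (-Real.cos 0 - 1) - Real.exp (-Real.cos 1 - 1)) /
      (Real.log (Real.exp (-Real.cos 0 - 1)) - Real.log (Real.exp (-Real.cos 1 - 1)))) <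
      sugenoIntegral volume (Icc (0:ℝ) 1)
        (fun x => ENNReal.ofReal (Real.exp (-Real.cos x - 1))) := by
    refine lt_of_lt_of_le ?_ hS
    exact (ENNReal.ofReal_lt_ofReal_iff (by norm_num)).mpr hL
  exact ⟨hmain, not_le.mpr hmain⟩
end
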